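/- For all nonnegative integers e and f, the subspace S^eD^f decomposes as the internal direct sum S^eD^f = (ker Δ ∩ S^eD^f) ⊕ δ(S^{e-1}D^{f-1}); that is, the image of δ on bihomogeneous polynomials of bidegree (e-1, f-1) is a linear complement of V(e,f) := ker Δ ∩ S^eD^f inside S^eD^f (where S^{e-1}D^{f-1} := 0 if e = 0 or f = 0). -/

import Mathlib

open MvPolynomial

noncomputable section

/-- The polynomial ring `R = ℂ[e₁,e₂,e₃,x₁,x₂,x₃]`:
variables `0,1,2` are `e₁,e₂,e₃` and variables `3,4,5` are `x₁,x₂,x₃`. -/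
abbrev R6 : Type := MvPolynomial (Fin 6) ℂ

/-- the variable `eᵢ` -/
def ev (i : Fin 3) : Fin 6 := ⟨i.val, by omega⟩

/-- the variable `xᵢ` -/
def xv (i : Fin 3) : Fin 6 := ⟨i.val + 3, by omega⟩

/-- `Δ = Σᵢ (∂/∂eᵢ)∘(∂/∂xᵢ)` -/
def Δ : Module.End ℂ R6 :=
  ∑ i : Fin 3, (pderiv (ev i)).toLinearMap ∘ₗ (pderiv (xv i)).toLinearMap

/-- `δ` = multiplication by `e₁x₁+e₂x₂+e₃x₃` -/
def δ : Module.End ℂ R6 :=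
  LinearMap.mulLeft ℂ (∑ i : Fin 3, X (ev i) * X (xv i))

/-- weight recording the total degree in the `e`-variables -/
def wE : Fin 6 → ℕ := fun i => if i.val < 3 then 1 else 0

/-- weight recording the total degree in the `x`-variables -/
def wX : Fin 6 → ℕ := fun i => if i.val < 3 then 0 else 1

/-- `S^aD^b`: polynomials homogeneous of degree `a` in `e₁,e₂,e₃` and of degree `b` in
`x₁,x₂,x₃`. -/
def SD (a b : ℕ) : Submodule ℂ R6 :=
  weightedHomogeneousSubmodule ℂ wE a ⊓ weightedHomogeneousSubmodule ℂ wX b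

/-- `S^{e-1}D^{f-1}`, interpreted as `0` when `e = 0` or `f = 0`. -/
def SDsub (e f : ℕ) : Submodule ℂ R6 :=
  if e = 0 ∨ f = 0 then ⊥ else SD (e - 1) (f - 1)

/-- `V(a,b) = ker Δ ∩ S^aD^b` -/
def V (a b : ℕ) : Submodule ℂ R6 := LinearMap.ker Δ ⊓ SD a b

/-! On `S^aD^b` one has `Δδ = δΔ + (a + b + 3)` (Euler's identity in the `e`- and in the
`x`-variables), and `Δ` lowers both degrees by one. Applying `Δ` to `Δδp + c p = 0` and inducting
on `a` therefore shows that `Δδ + c` is injective on every `S^aD^b` for `c ≥ 0`. So `Δδ` is an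
automorphism of the finite-dimensional space `S^{e-1}D^{f-1}`: every `p ∈ S^eD^f` splits as
`(p - δq) + δq` with `Δδq = Δp`, and `ker Δ` meets `δ(S^{e-1}D^{f-1})` only in `0`. -/

namespace LinearMap

theorem ker_inf_map_eq_bot {R M : Type*} [Semiring R] [AddCommMonoid M] [Module R M]
    {A B : M →ₗ[R] M} {W : Submodule R M} (hinj : ∀ w ∈ W, A (B w) = 0 → w = 0) :
    ker A ⊓ W.map B = ⊥ := by
  rw [eq_bot_iff]
  rintro _ ⟨hker, w, hw, rfl⟩
  rw [hinj w hw hker, map_zero]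
  exact Submodule.zero_mem _

theorem ker_inf_sup_map_eq {K M : Type*} [DivisionRing K] [AddCommGroup M] [Module K M]
    {A B : M →ₗ[K] M} {U W : Submodule K M} [FiniteDimensional K W] (hA : ∀ u ∈ U, A u ∈ W)
    (hB : ∀ w ∈ W, B w ∈ U) (hinj : ∀ w ∈ W, A (B w) = 0 → w = 0) :
    ker A ⊓ U ⊔ W.map B = U := by
  refine le_antisymm (sup_le inf_le_right (Submodule.map_le_iff_le_comap.mpr hB)) fun u hu => ?_
  let T : W →ₗ[K] W := (A ∘ₗ B).restrict fun w hw => hA _ (hB w hw)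
  have hT : Function.Injective T := by
    rw [← ker_eq_bot, ker_eq_bot']
    exact fun w hw => Subtype.ext (hinj w w.2 (congrArg Subtype.val hw))
  obtain ⟨w, hw⟩ := injective_iff_surjective.mp hT ⟨A u, hA u hu⟩
  have hABw : A (B w) = A u := congrArg Subtype.val hw
  rw [← sub_add_cancel u (B w)]
  refine Submodule.add_mem_sup ⟨?_, U.sub_mem hu (hB w w.2)⟩ ⟨w, w.2, rfl⟩
  simp [hABw]

end LinearMap

namespace MvPolynomial

variable {σ R : Type*} [CommSemiring R] {φ : MvPolynomial σ R}

theorem IsWeightedHomogeneous.add_weight {M : Type*} [AddCommMonoid M] {w₁ w₂ : σ → M}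
    {m n : M} (h₁ : φ.IsWeightedHomogeneous w₁ m) (h₂ : φ.IsWeightedHomogeneous w₂ n) :
    φ.IsWeightedHomogeneous (w₁ + w₂) (m + n) := fun d hd => by
  simp [Finsupp.weight_apply, Finsupp.sum_add, ← h₁ hd, ← h₂ hd]

theorem pderiv_eq_zero_of_isWeightedHomogeneous_zero {w : σ → ℕ} {i : σ} (hw : w i ≠ 0)
    (h : φ.IsWeightedHomogeneous w 0) : pderiv i φ = 0 := by
  refine pderiv_eq_zero_of_notMem_vars fun hi => ?_
  obtain ⟨d, hd, hid⟩ := (mem_vars_iff_mem_support i).mp hi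
  have hdi := Finsupp.le_weight w hw d
  rw [h (mem_support_iff.mp hd)] at hdi
  exact Finsupp.mem_support_iff.mp hid (Nat.le_zero.mp hdi)

end MvPolynomial

lemma wE_ev (i : Fin 3) : wE (ev i) = 1 := by simp [wE, ev]
lemma wE_xv (i : Fin 3) : wE (xv i) = 0 := by simp [wE, xv]
lemma wX_ev (i : Fin 3) : wX (ev i) = 0 := by simp [wX, ev]
lemma wX_xv (i : Fin 3) : wX (xv i) = 1 := by simp [wX, xv]

lemma wE_add_wX : wE + wX = 1 := by
  ext i
  simp only [wE, wX, Pi.add_apply, Pi.one_apply]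
  split <;> rfl

lemma ev_injective : Function.Injective ev := fun i j h => by
  simpa [ev, Fin.ext_iff] using h

lemma xv_injective : Function.Injective xv := fun i j h => by
  simpa [xv, Fin.ext_iff] using h

lemma ev_ne_xv (i j : Fin 3) : ev i ≠ xv j := by
  simp [ev, xv, Fin.ext_iff]
  omega

lemma sum_eq_sum_ev_add_sum_xv {M : Type*} [AddCommMonoid M] (g : Fin 6 → M) :
    ∑ i, g i = ∑ i : Fin 3, g (ev i) + ∑ i : Fin 3, g (xv i) := by
  simp only [Fin.sum_univ_six, Fin.sum_univ_three, ← add_assoc]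
  rfl

lemma sum_X_ev_mul_pderiv {p : R6} {a : ℕ} (h : IsWeightedHomogeneous wE p a) :
    ∑ i : Fin 3, X (ev i) * pderiv (ev i) p = a • p := by
  simpa [sum_eq_sum_ev_add_sum_xv, wE_ev, wE_xv] using h.sum_weight_X_mul_pderiv

lemma sum_X_xv_mul_pderiv {p : R6} {b : ℕ} (h : IsWeightedHomogeneous wX p b) :
    ∑ i : Fin 3, X (xv i) * pderiv (xv i) p = b • p := by
  simpa [sum_eq_sum_ev_add_sum_xv, wX_ev, wX_xv] using h.sum_weight_X_mul_pderiv

def eDotX : R6 := ∑ i : Fin 3, X (ev i) * X (xv i)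

lemma δ_apply (p : R6) : δ p = eDotX * p := rfl

lemma Δ_apply (p : R6) : Δ p = ∑ i : Fin 3, pderiv (ev i) (pderiv (xv i) p) := by
  simp [Δ]

lemma pderiv_xv_eDotX (i : Fin 3) : pderiv (xv i) eDotX = X (ev i) := by
  classical
  simp [eDotX, pderiv_X, Pi.single_apply, ev_ne_xv, xv_injective.eq_iff]

lemma pderiv_ev_eDotX (i : Fin 3) : pderiv (ev i) eDotX = X (xv i) := by
  classical
  simp [eDotX, pderiv_X, Pi.single_apply, (ev_ne_xv _ _).symm, ev_injective.eq_iff]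

lemma eDotX_mem_SD : eDotX ∈ SD 1 1 := by
  refine ⟨IsWeightedHomogeneous.sum _ _ _ fun i _ => ?_,
    IsWeightedHomogeneous.sum _ _ _ fun i _ => ?_⟩
  · simpa [wE_ev, wE_xv] using
      (isWeightedHomogeneous_X ℂ wE (ev i)).mul (isWeightedHomogeneous_X ℂ wE (xv i))
  · simpa [wX_ev, wX_xv] using
      (isWeightedHomogeneous_X ℂ wX (ev i)).mul (isWeightedHomogeneous_X ℂ wX (xv i))

lemma δ_mem_SD {a b : ℕ} {p : R6} (hp : p ∈ SD a b) : δ p ∈ SD (a + 1) (b + 1) := by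
  rw [add_comm a, add_comm b]
  exact ⟨eDotX_mem_SD.1.mul hp.1, eDotX_mem_SD.2.mul hp.2⟩

lemma Δ_mem_SD {a b : ℕ} {p : R6} (hp : p ∈ SD (a + 1) (b + 1)) : Δ p ∈ SD a b := by
  rw [Δ_apply]
  refine Submodule.sum_mem _ fun i _ => ⟨?_, ?_⟩
  · exact (hp.1.pderiv (by rw [wE_xv])).pderiv (by rw [wE_ev])
  · exact (hp.2.pderiv (by rw [wX_xv])).pderiv (by simp [wX_ev])

lemma Δ_eq_zero_of_mem_SD_zero_left {b : ℕ} {p : R6} (hp : p ∈ SD 0 b) : Δ p = 0 := by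
  rw [Δ_apply]
  refine Finset.sum_eq_zero fun i _ => ?_
  exact pderiv_eq_zero_of_isWeightedHomogeneous_zero (by simp [wE_ev])
    (hp.1.pderiv (by rw [wE_xv]))

lemma Δ_eq_zero_of_mem_SD_zero_right {a : ℕ} {p : R6} (hp : p ∈ SD a 0) : Δ p = 0 := by
  rw [Δ_apply]
  refine Finset.sum_eq_zero fun i _ => ?_
  rw [pderiv_eq_zero_of_isWeightedHomogeneous_zero (by simp [wX_xv]) hp.2, map_zero]

lemma SDsub_le (e f : ℕ) : SDsub e f ≤ SD (e - 1) (f - 1) := by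
  unfold SDsub
  split_ifs
  exacts [bot_le, le_rfl]

lemma Δ_mem_SDsub {e f : ℕ} {p : R6} (hp : p ∈ SD e f) : Δ p ∈ SDsub e f := by
  rcases e with _ | a
  · simp [SDsub, Δ_eq_zero_of_mem_SD_zero_left hp]
  rcases f with _ | b
  · simp [SDsub, Δ_eq_zero_of_mem_SD_zero_right hp]
  simpa [SDsub] using Δ_mem_SD hp

lemma δ_mem_SD_of_mem_SDsub {e f : ℕ} {p : R6} (hp : p ∈ SDsub e f) : δ p ∈ SD e f := by
  unfold SDsub at hp
  split_ifs at hp with h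
  · simp [(Submodule.mem_bot ℂ).mp hp]
  · obtain ⟨he, hf⟩ := not_or.mp h
    simpa [Nat.sub_add_cancel (Nat.pos_of_ne_zero he),
      Nat.sub_add_cancel (Nat.pos_of_ne_zero hf)] using δ_mem_SD hp

lemma SD_le_homogeneousSubmodule (a b : ℕ) :
    SD a b ≤ homogeneousSubmodule (Fin 6) ℂ (a + b) := fun _ hp => by
  have h := IsWeightedHomogeneous.add_weight hp.1 hp.2
  rwa [wE_add_wX] at h

instance (a b : ℕ) : FiniteDimensional ℂ (SD a b) :=
  haveI := Module.Finite.iff_fg.mpr (homogeneousSubmodule_fg (σ := Fin 6) (R := ℂ) (a + b))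
  Submodule.finiteDimensional_of_le (SD_le_homogeneousSubmodule a b)

instance (e f : ℕ) : FiniteDimensional ℂ (SDsub e f) :=
  Submodule.finiteDimensional_of_le (SDsub_le e f)

lemma Δ_δ_eq_δ_Δ_add {a b : ℕ} {p : R6} (hp : p ∈ SD a b) :
    Δ (δ p) = δ (Δ p) + (a + b + 3) • p := by
  have hi : ∀ i : Fin 3, pderiv (ev i) (pderiv (xv i) (eDotX * p)) =
      p + X (ev i) * pderiv (ev i) p + X (xv i) * pderiv (xv i) p +
        eDotX * pderiv (ev i) (pderiv (xv i) p) := by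
    intro i
    simp only [pderiv_mul, pderiv_xv_eDotX, pderiv_ev_eDotX, map_add, pderiv_X_self]
    ring
  simp only [δ_apply, Δ_apply, hi, Finset.sum_add_distrib, sum_X_ev_mul_pderiv hp.1,
    sum_X_xv_mul_pderiv hp.2, ← Finset.mul_sum, Finset.sum_const, Finset.card_univ,
    Fintype.card_fin]
  module

lemma Δ_δ_add_nsmul {a b : ℕ} {p : R6} (hp : p ∈ SD a b) (c : ℕ) :
    Δ (δ p) + c • p = δ (Δ p) + (a + b + 3 + c) • p := by
  rw [Δ_δ_eq_δ_Δ_add hp, add_smul _ c, add_assoc]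

theorem eq_zero_of_Δ_δ_add_nsmul_eq_zero {a b c : ℕ} {p : R6} (hp : p ∈ SD a b)
    (h : Δ (δ p) + c • p = 0) : p = 0 := by
  induction a using Nat.strong_induction_on generalizing b c p with
  | _ a ih =>
    rw [Δ_δ_add_nsmul hp] at h
    have hΔ : Δ p = 0 := by
      rcases Nat.eq_zero_or_pos a with rfl | ha
      · exact Δ_eq_zero_of_mem_SD_zero_left hp
      · refine ih (a - 1) (by omega) (c := a + b + 3 + c) (SDsub_le _ _ (Δ_mem_SDsub hp)) ?_
        simpa only [map_add, map_nsmul, map_zero] using congrArg Δ h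
    rw [hΔ, map_zero, zero_add] at h
    exact (smul_eq_zero.mp h).resolve_left (by omega)

/-- `S^eD^f` decomposes as the internal direct sum of `V(e,f) = ker Δ ∩ S^eD^f` and the image
`δ(S^{e-1}D^{f-1})`. -/
theorem stmt4 (e f : ℕ) :
    (V e f ⊔ (SDsub e f).map δ = SD e f) ∧ (V e f ⊓ (SDsub e f).map δ = ⊥) := by
  have hinj : ∀ p ∈ SDsub e f, Δ (δ p) = 0 → p = 0 := fun p hp h =>
    eq_zero_of_Δ_δ_add_nsmul_eq_zero (c := 0) (SDsub_le e f hp) (by simpa using h)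
  exact ⟨LinearMap.ker_inf_sup_map_eq (fun _ => Δ_mem_SDsub) (fun _ => δ_mem_SD_of_mem_SDsub) hinj,
    eq_bot_mono (inf_le_inf_right _ inf_le_left) (LinearMap.ker_inf_map_eq_bot hinj)⟩
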